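/- For every twice differentiable function F : (0,1) → ℂ^{ℓ+1} and every u ∈ (0,1): (1−u²)(ΨF)″(u) − u·C·(ΨF)′(u) − V·(ΨF)(u) = Ψ(u)·[ (1−u²)F″(u) + (−u·C + S₁)F′(u) + Λ₀·F(u) ]. -/

import Mathlib

/-!
Entry `(j, k)` of `Ψ` is a constant multiple of the Gegenbauer polynomial `C^{j+1}_{k-j}(u)`,
that is of `₂F₁(j - k, k + j + 2; j + 3/2; (1 - u)/2)`. Expanding `(ΨF)'' = Ψ''F + 2Ψ'F' + ΨF''`,
the claim reduces to two matrix identities: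
`(1 - u²)Ψ'' - uCΨ' - VΨ = ΨΛ₀`, which entrywise is the Gegenbauer differential equation, and
`2(1 - u²)Ψ' - uCΨ = Ψ(-uC + S₁)`, which entrywise is the contiguous relation
`(1 - u²) (C^ν_{n+1})' = (n + 2ν) C^ν_n - (n + 1) u C^ν_{n+1}`.
Both come down to recurrences for the coefficients of the terminating series.
-/

namespace Stmt3

/-- The Gegenbauer polynomial `C^{j+1}_{k-j}(u)` (for `0 ≤ j ≤ k`), given by its
terminating hypergeometric expansion. -/
noncomputable def geg (j k : ℕ) (u : ℝ) : ℂ :=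
  (Nat.choose (k + j + 1) (k - j) : ℂ) *
    ∑ m ∈ Finset.range (k - j + 1),
      ((ascPochhammer ℂ m).eval ((j:ℂ) - (k:ℂ)) * (ascPochhammer ℂ m).eval ((k:ℂ) + (j:ℂ) + 2)) /
        ((ascPochhammer ℂ m).eval ((j:ℂ) + 3/2) * (Nat.factorial m : ℂ)) *
        (((1 - u)/2 : ℝ) : ℂ) ^ m

/-- The upper-triangular matrix `Ψ(u)` with entries
`Ψ_{jk}(u) = ((2j+1)(-2i)^j k! j! / (k+j+1)!) C^{j+1}_{k-j}(u)` for `j ≤ k`. -/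
noncomputable def PsiM (ℓ : ℕ) (u : ℝ) : Matrix (Fin (ℓ+1)) (Fin (ℓ+1)) ℂ :=
  Matrix.of fun j k =>
    if (j:ℕ) ≤ (k:ℕ) then
      ((2*((j:ℕ):ℂ) + 1) * (-2*Complex.I)^(j:ℕ) * (Nat.factorial (k:ℕ) : ℂ) *
          (Nat.factorial (j:ℕ) : ℂ) / (Nat.factorial ((k:ℕ) + (j:ℕ) + 1) : ℂ)) * geg j k u
    else 0

/-- `C = Σ_j (2j+3) E_{jj}`. -/
noncomputable def Cmat (ℓ : ℕ) : Matrix (Fin (ℓ+1)) (Fin (ℓ+1)) ℂ :=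
  Matrix.diagonal fun j => 2*((j:ℕ):ℂ) + 3

/-- `V = Σ_j j(j+2) E_{jj}`. -/
noncomputable def Vmat (ℓ : ℕ) : Matrix (Fin (ℓ+1)) (Fin (ℓ+1)) ℂ :=
  Matrix.diagonal fun j => ((j:ℕ):ℂ) * (((j:ℕ):ℂ) + 2)

/-- `S₁ = Σ_{j=0}^{ℓ-1} 2(j+1) E_{j,j+1}`. -/
noncomputable def S1 (ℓ : ℕ) : Matrix (Fin (ℓ+1)) (Fin (ℓ+1)) ℂ :=
  Matrix.of fun j k =>
    if (j:ℕ) + 1 = (k:ℕ) then 2*(((j:ℕ):ℂ) + 1) else 0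

/-- `Λ₀ = -Σ_j j(j+2) E_{jj}`. -/
noncomputable def Lam0 (ℓ : ℕ) : Matrix (Fin (ℓ+1)) (Fin (ℓ+1)) ℂ :=
  Matrix.diagonal fun j => -(((j:ℕ):ℂ) * (((j:ℕ):ℂ) + 2))

open Polynomial Finset Filter Topology Matrix

lemma coeff_X_mul_derivative {R : Type*} [CommSemiring R] (p : R[X]) (m : ℕ) :
    (X * derivative p).coeff m = m * p.coeff m := by
  cases m <;> simp [coeff_derivative, coeff_X_mul, mul_comm]

lemma coeff_hypergeometricOperator {R : Type*} [CommRing R] (p : R[X]) (a b c : R) (m : ℕ) :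
    (X * (1 - X) * derivative (derivative p) + (C c - C (a + b + 1) * X) * derivative p
      - C (a * b) * p).coeff m
      = (m + 1) * (c + m) * p.coeff (m + 1) - (a + m) * (b + m) * p.coeff m := by
  have euler : X * (1 - X) * derivative (derivative p) + (C c - C (a + b + 1) * X) * derivative p
      - C (a * b) * p = derivative (X * derivative p) + C (c - 1) * derivative p
        - X * derivative (X * derivative p) - C (a + b) * (X * derivative p) - C (a * b) * p := by
    simp only [derivative_mul, derivative_X, map_sub, map_add, map_one]
    ring
  rw [euler]
  simp only [coeff_add, coeff_sub, coeff_derivative, coeff_X_mul_derivative, coeff_C_mul]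
  push_cast
  ring

lemma ascPochhammer_succ_eval_left {R : Type*} [CommSemiring R] (x : R) (m : ℕ) :
    (ascPochhammer R (m + 1)).eval x = x * (ascPochhammer R m).eval (x + 1) := by
  simp [ascPochhammer_succ_left, eval_comp]

section Hypergeometric

variable {𝕂 : Type*} [Field 𝕂]

lemma ordinaryHypergeometricCoefficient_neg_nat {n m : ℕ} (b c : 𝕂) (h : n < m) :
    ordinaryHypergeometricCoefficient (-n : 𝕂) b c m = 0 := by
  simp only [ordinaryHypergeometricCoefficient, ascPochhammer_eval_neg_coe_nat_of_lt h, mul_zero,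
    zero_mul]

/-- `₂F₁(-n, b; c; X)`, which terminates at degree `n`. -/
noncomputable def hypergeometricPoly (n : ℕ) (b c : 𝕂) : 𝕂[X] :=
  ∑ m ∈ range (n + 1), C (ordinaryHypergeometricCoefficient (-n : 𝕂) b c m) * X ^ m

lemma coeff_hypergeometricPoly (n : ℕ) (b c : 𝕂) (m : ℕ) :
    (hypergeometricPoly n b c).coeff m = ordinaryHypergeometricCoefficient (-n : 𝕂) b c m := by
  simp only [hypergeometricPoly, finsetSum_coeff, coeff_C_mul_X_pow, sum_ite_eq, mem_range]
  split_ifs with h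
  · rfl
  · exact (ordinaryHypergeometricCoefficient_neg_nat b c (by omega)).symm

/-- `₂F₁(-n, n + 2ν; ν + 1/2; (1 - X)/2)`, the Gegenbauer polynomial `C^ν_n` divided by
`(2ν)_n / n!`. -/
noncomputable def gegenbauerHyp (ν : 𝕂) (n : ℕ) : 𝕂[X] :=
  (hypergeometricPoly n (n + 2 * ν) (ν + 1 / 2)).comp (C 2⁻¹ * (1 - X))

lemma eval_derivative_gegenbauerHyp (ν : 𝕂) (n : ℕ) (z : 𝕂) :
    (derivative (gegenbauerHyp ν n)).eval z
      = -2⁻¹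
        * (derivative (hypergeometricPoly n (n + 2 * ν) (ν + 1 / 2))).eval (2⁻¹ * (1 - z)) := by
  simp [gegenbauerHyp, derivative_comp, eval_comp]

lemma eval_derivative_derivative_gegenbauerHyp (ν : 𝕂) (n : ℕ) (z : 𝕂) :
    (derivative (derivative (gegenbauerHyp ν n))).eval z
      = 4⁻¹ * (derivative (derivative (hypergeometricPoly n (n + 2 * ν) (ν + 1 / 2)))).eval
          (2⁻¹ * (1 - z)) := by
  simp only [gegenbauerHyp, mul_comm, one_div, derivative_comp, derivative_mul, derivative_sub,
    derivative_one, derivative_X, zero_sub, neg_mul, one_mul, derivative_C, zero_mul, add_zero,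
    derivative_neg, mul_neg, zero_add, neg_neg, eval_mul, eval_C, eval_comp, eval_sub, eval_one, eval_X]
  rw [← mul_assoc, ← mul_inv]
  norm_num

lemma ordinaryHypergeometricCoefficient_neg_succ (b c : 𝕂) (n m : ℕ) :
    (m - n - 1) * b * ordinaryHypergeometricCoefficient (-(n + 1) : 𝕂) (b + 1) c m
      = -(n + 1) * (b + m) * ordinaryHypergeometricCoefficient (-n : 𝕂) b c m := by
  have ha : (ascPochhammer 𝕂 m).eval (-(n + 1) : 𝕂) * (m - n - 1)
      = -(n + 1) * (ascPochhammer 𝕂 m).eval (-n : 𝕂) := by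
    calc _ = (ascPochhammer 𝕂 (m + 1)).eval (-(n + 1) : 𝕂) := by
          rw [ascPochhammer_succ_eval]; ring
      _ = _ := by rw [ascPochhammer_succ_eval_left]; ring_nf
  have hb : b * (ascPochhammer 𝕂 m).eval (b + 1) = (ascPochhammer 𝕂 m).eval b * (b + m) := by
    rw [← ascPochhammer_succ_eval, ascPochhammer_succ_eval_left]
  simp only [ordinaryHypergeometricCoefficient]
  linear_combination ((m.factorial : 𝕂)⁻¹ * ((ascPochhammer 𝕂 m).eval c)⁻¹)
    * (b * (ascPochhammer 𝕂 m).eval (b + 1) * ha - (n + 1) * (ascPochhammer 𝕂 m).eval (-n : 𝕂) * hb)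

variable [CharZero 𝕂]

lemma ordinaryHypergeometricCoefficient_succ {a b c : 𝕂} (hc : ∀ k : ℕ, (k : 𝕂) ≠ -c) (m : ℕ) :
    (m + 1) * (c + m) * ordinaryHypergeometricCoefficient a b c (m + 1)
      = (a + m) * (b + m) * ordinaryHypergeometricCoefficient a b c m := by
  have hcm : c + m ≠ 0 := fun h => hc m (by linear_combination h)
  have hP : (ascPochhammer 𝕂 m).eval c ≠ 0 := by simpa using fun k _ => hc k
  simp only [ordinaryHypergeometricCoefficient, ascPochhammer_succ_eval, Nat.factorial_succ]
  push_cast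
  field_simp

theorem hypergeometricPoly_ode {n : ℕ} {b c : 𝕂} (hc : ∀ k : ℕ, (k : 𝕂) ≠ -c) :
    X * (1 - X) * derivative (derivative (hypergeometricPoly n b c))
      + (C c - C (-n + b + 1) * X) * derivative (hypergeometricPoly n b c)
      - C (-n * b) * hypergeometricPoly n b c = 0 := by
  ext m
  rw [coeff_hypergeometricOperator, coeff_hypergeometricPoly, coeff_hypergeometricPoly,
    ordinaryHypergeometricCoefficient_succ hc, coeff_zero, sub_self]

lemma ordinaryHypergeometricCoefficient_contiguous {ν : 𝕂} (hν : ∀ k : ℕ, (k : 𝕂) ≠ -(ν + 1 / 2))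
    (n m : ℕ) :
    (n - 1 - 2 * m)
        * ordinaryHypergeometricCoefficient (-(n + 1) : 𝕂) (n + 1 + 2 * ν) (ν + 1 / 2) (m + 1)
      + 2 * (m - n - 1)
        * ordinaryHypergeometricCoefficient (-(n + 1) : 𝕂) (n + 1 + 2 * ν) (ν + 1 / 2) m
      = (n + 1) * ordinaryHypergeometricCoefficient (-n : 𝕂) (n + 2 * ν) (ν + 1 / 2) (m + 1) := by
  have hcm : ν + 1 / 2 + m ≠ 0 := fun h => hν m (by linear_combination h)
  have R₁ := ordinaryHypergeometricCoefficient_succ (a := (-(n + 1) : 𝕂)) (b := n + 1 + 2 * ν) hν m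
  have R₂ := ordinaryHypergeometricCoefficient_succ (a := (-n : 𝕂)) (b := n + 2 * ν) hν m
  have N := ordinaryHypergeometricCoefficient_neg_succ (n + 2 * ν) (ν + 1 / 2) n m
  rw [show (n : 𝕂) + 2 * ν + 1 = n + 1 + 2 * ν by ring] at N
  refine mul_left_cancel₀ (mul_ne_zero (Nat.cast_add_one_ne_zero m) hcm) ?_
  linear_combination (n - 1 - 2 * m) * R₁ - (n + 1) * R₂ + (n - m) * N

theorem hypergeometricPoly_contiguous {ν : 𝕂} (hν : ∀ k : ℕ, (k : 𝕂) ≠ -(ν + 1 / 2)) (n : ℕ) :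
    2 * X * (X - 1) * derivative (hypergeometricPoly (n + 1) ((n + 1 : ℕ) + 2 * ν) (ν + 1 / 2))
      + C ((n : 𝕂) + 1) * (1 - 2 * X) * hypergeometricPoly (n + 1) ((n + 1 : ℕ) + 2 * ν) (ν + 1 / 2)
      = C ((n : 𝕂) + 1) * hypergeometricPoly n (n + 2 * ν) (ν + 1 / 2) := by
  set q := hypergeometricPoly (n + 1) ((n + 1 : ℕ) + 2 * ν) (ν + 1 / 2) with hq
  have shifted : 2 * X * (X - 1) * derivative q + C ((n : 𝕂) + 1) * (1 - 2 * X) * q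
      = X * (2 * (X * derivative q) - C (2 * ((n : 𝕂) + 1)) * q) + C ((n : 𝕂) + 1) * q
        - 2 * (X * derivative q) := by
    simp only [map_mul, map_ofNat]
    ring
  rw [shifted]
  ext m
  cases m with
  | zero => simp [hq, coeff_hypergeometricPoly]
  | succ m =>
    simp only [coeff_add, coeff_sub, coeff_ofNat_mul, coeff_C_mul, coeff_X_mul_derivative]
    simp only [coeff_X_mul, coeff_ofNat_mul, coeff_sub, coeff_C_mul, coeff_X_mul_derivative, hq,
      coeff_hypergeometricPoly, Nat.cast_add, Nat.cast_one]
    linear_combination ordinaryHypergeometricCoefficient_contiguous hν n m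

theorem gegenbauerHyp_ode {ν : 𝕂} (hν : ∀ k : ℕ, (k : 𝕂) ≠ -(ν + 1 / 2)) (n : ℕ) :
    (1 - X ^ 2) * derivative (derivative (gegenbauerHyp ν n))
      - C (2 * ν + 1) * X * derivative (gegenbauerHyp ν n)
      + C (n * (n + 2 * ν)) * gegenbauerHyp ν n = 0 := by
  refine Polynomial.funext fun z => ?_
  have h := congrArg (eval (2⁻¹ * (1 - z))) (hypergeometricPoly_ode (n := n) (b := n + 2 * ν) hν)
  simp only [eval_add, eval_sub, eval_mul, eval_X, eval_C, eval_one, eval_zero] at h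
  simp only [eval_add, eval_sub, eval_mul, eval_pow, eval_X, eval_C, eval_one, eval_zero,
    eval_derivative_gegenbauerHyp, eval_derivative_derivative_gegenbauerHyp]
  simp only [gegenbauerHyp, eval_comp, eval_mul, eval_C, eval_sub, eval_one, eval_X]
  linear_combination h

theorem gegenbauerHyp_contiguous {ν : 𝕂} (hν : ∀ k : ℕ, (k : 𝕂) ≠ -(ν + 1 / 2)) (n : ℕ) :
    (1 - X ^ 2) * derivative (gegenbauerHyp ν (n + 1))
      + C ((n : 𝕂) + 1) * X * gegenbauerHyp ν (n + 1)
      = C ((n : 𝕂) + 1) * gegenbauerHyp ν n := by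
  refine Polynomial.funext fun z => ?_
  have h := congrArg (eval (2⁻¹ * (1 - z))) (hypergeometricPoly_contiguous hν n)
  simp only [eval_add, eval_sub, eval_mul, eval_X, eval_C, eval_one, eval_ofNat] at h
  simp only [eval_add, eval_sub, eval_mul, eval_pow, eval_X, eval_C, eval_one,
    eval_derivative_gegenbauerHyp]
  simp only [gegenbauerHyp, eval_comp, eval_mul, eval_C, eval_sub, eval_one, eval_X]
  linear_combination h

end Hypergeometric

section MulVecDeriv

variable {𝕜 𝔸 : Type*} [NontriviallyNormedField 𝕜] [NormedCommRing 𝔸] [NormedAlgebra 𝕜 𝔸]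
  {m n : Type*} [Fintype n] {Ψ : 𝕜 → Matrix m n 𝔸} {F : 𝕜 → n → 𝔸} {x : 𝕜}

theorem hasDerivAt_mulVec {Ψ' : Matrix m n 𝔸} {F' : n → 𝔸}
    (hΨ : ∀ i k, HasDerivAt (fun y => Ψ y i k) (Ψ' i k) x) (hF : HasDerivAt F F' x) :
    HasDerivAt (fun y => Ψ y *ᵥ F y) (Ψ' *ᵥ F x + Ψ x *ᵥ F') x := by
  refine hasDerivAt_pi.2 fun i => ?_
  simp only [mulVec, dotProduct, Pi.add_apply, ← Finset.sum_add_distrib]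
  exact HasDerivAt.fun_sum fun k _ => (hΨ i k).mul (hasDerivAt_pi.1 hF k)

theorem hasDerivAt_deriv_mulVec [Fintype m] {Ψ' : 𝕜 → Matrix m n 𝔸} {Ψ'' : Matrix m n 𝔸}
    (hΨ : ∀ᶠ y in 𝓝 x, ∀ i k, HasDerivAt (fun z => Ψ z i k) (Ψ' y i k) y)
    (hΨ' : ∀ i k, HasDerivAt (fun y => Ψ' y i k) (Ψ'' i k) x)
    (hF : ∀ᶠ y in 𝓝 x, DifferentiableAt 𝕜 F y) (hF' : DifferentiableAt 𝕜 (deriv F) x) :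
    HasDerivAt (deriv fun y => Ψ y *ᵥ F y)
      (Ψ'' *ᵥ F x + 2 • (Ψ' x *ᵥ deriv F x) + Ψ x *ᵥ deriv (deriv F) x) x := by
  have hderiv : deriv (fun y => Ψ y *ᵥ F y) =ᶠ[𝓝 x] fun y => Ψ' y *ᵥ F y + Ψ y *ᵥ deriv F y :=
    (hΨ.and hF).mono fun y hy => (hasDerivAt_mulVec hy.1 hy.2.hasDerivAt).deriv
  have := (hasDerivAt_mulVec hΨ' hF.self_of_nhds.hasDerivAt).add
    (hasDerivAt_mulVec hΨ.self_of_nhds hF'.hasDerivAt)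
  simpa only [two_smul, add_assoc] using this.congr_of_eventuallyEq hderiv

end MulVecDeriv

theorem mulVec_second_order_conj {R n : Type*} [CommRing R] [Fintype n] (a : R)
    (B V B' Λ Ψ Ψ' Ψ'' : Matrix n n R) (f f' f'' : n → R)
    (h₂ : a • Ψ'' - B * Ψ' - V * Ψ = Ψ * Λ) (h₁ : (2 * a) • Ψ' - B * Ψ = Ψ * B') :
    a • (Ψ'' *ᵥ f + 2 • (Ψ' *ᵥ f') + Ψ *ᵥ f'') - B *ᵥ (Ψ' *ᵥ f + Ψ *ᵥ f') - V *ᵥ (Ψ *ᵥ f)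
      = Ψ *ᵥ (a • f'' + B' *ᵥ f' + Λ *ᵥ f) := by
  simp only [mulVec_add, mulVec_smul, mulVec_mulVec, ← h₂, ← h₁, sub_mulVec, smul_mulVec]
  module

section Psi

lemma natCast_ne_neg_add_three_halves (j k : ℕ) : (k : ℂ) ≠ -((j : ℂ) + 1 + 1 / 2) := by
  intro h
  have := congrArg Complex.re h
  norm_num at this
  linarith

-- The binomial is `(2j + 2)_{k-j} / (k-j)!`, turning `gegenbauerHyp (j + 1) (k - j)` into
-- `C^{j+1}_{k-j}`.
noncomputable def psiCoeff (j k : ℕ) : ℂ :=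
  (2 * (j : ℂ) + 1) * (-2 * Complex.I) ^ j * (k.factorial : ℂ) * (j.factorial : ℂ)
    / ((k + j + 1).factorial : ℂ) * ((k + j + 1).choose (k - j) : ℂ)

lemma psiCoeff_succ (j n : ℕ) :
    ((n : ℂ) + 1) * psiCoeff j (j + n + 1) = ((j : ℂ) + n + 1) * psiCoeff j (j + n) := by
  have hchoose : ((j + n + j + 1 + 1).choose (n + 1) : ℂ) * (n + 1)
      = (j + n + j + 1 + 1) * (j + n + j + 1).choose n := by
    exact_mod_cast (Nat.add_one_mul_choose_eq (j + n + j + 1) n).symm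
  simp only [psiCoeff, show j + n + 1 + j + 1 = j + n + j + 1 + 1 by omega,
    show j + n + 1 - j = n + 1 by omega, show j + n - j = n by omega,
    Nat.factorial_succ (j + n), Nat.factorial_succ (j + n + j + 1)]
  push_cast
  have hfact : ((j + n + j + 1).factorial : ℂ) ≠ 0 := Nat.cast_ne_zero.2 (Nat.factorial_ne_zero _)
  have hsucc : (j : ℂ) + n + j + 1 + 1 ≠ 0 := by exact_mod_cast (j + n + j + 1).succ_ne_zero
  field_simp
  linear_combination (2 * (j : ℂ) + 1) * (j + n + 1) * (j + n).factorial * j.factorial * hchoose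

noncomputable def psiEntry (j k : ℕ) : ℂ[X] :=
  if j ≤ k then C (psiCoeff j k) * gegenbauerHyp ((j : ℂ) + 1) (k - j) else 0

noncomputable def psiDeriv (ℓ r : ℕ) (z : ℂ) : Matrix (Fin (ℓ + 1)) (Fin (ℓ + 1)) ℂ :=
  Matrix.of fun j k => (derivative^[r] (psiEntry j k)).eval z

lemma geg_eq_eval_gegenbauerHyp {j k : ℕ} (hjk : j ≤ k) (u : ℝ) :
    geg j k u
      = ((k + j + 1).choose (k - j) : ℂ) * (gegenbauerHyp ((j : ℂ) + 1) (k - j)).eval (u : ℂ) := by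
  obtain ⟨n, rfl⟩ := Nat.exists_eq_add_of_le hjk
  simp only [geg, gegenbauerHyp, hypergeometricPoly, eval_comp, eval_finsetSum, eval_mul, eval_C,
    eval_pow, eval_X, eval_sub, eval_one, Nat.add_sub_cancel_left]
  congr 1
  refine Finset.sum_congr rfl fun m _ => ?_
  push_cast
  ring_nf

lemma PsiM_eq_psiDeriv (ℓ : ℕ) (u : ℝ) : PsiM ℓ u = psiDeriv ℓ 0 u := by
  ext j k
  simp only [PsiM, psiDeriv, psiEntry, Matrix.of_apply, Function.iterate_zero, id]
  split_ifs with h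
  · rw [geg_eq_eval_gegenbauerHyp h, eval_mul, eval_C, psiCoeff]
    ring
  · rw [eval_zero]

lemma psiEntry_ode (j k : ℕ) (z : ℂ) :
    (1 - z ^ 2) * (derivative (derivative (psiEntry j k))).eval z
      - (2 * j + 3) * z * (derivative (psiEntry j k)).eval z - j * (j + 2) * (psiEntry j k).eval z
      = -(psiEntry j k).eval z * (k * (k + 2)) := by
  unfold psiEntry
  split_ifs with hjk
  · obtain ⟨n, rfl⟩ := Nat.exists_eq_add_of_le hjk
    have h := congrArg (eval z) (gegenbauerHyp_ode (natCast_ne_neg_add_three_halves j) n)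
    simp only [eval_add, eval_sub, eval_mul, eval_pow, eval_X, eval_C, eval_one, eval_zero] at h
    simp only [derivative_C_mul, eval_mul, eval_C, Nat.add_sub_cancel_left]
    push_cast
    linear_combination psiCoeff j (j + n) * h
  · simp

lemma psiEntry_contiguous (j k : ℕ) (z : ℂ) :
    2 * (1 - z ^ 2) * (derivative (psiEntry j k)).eval z - z * (2 * j + 3) * (psiEntry j k).eval z
      = -z * (2 * k + 3) * (psiEntry j k).eval z + 2 * k * (psiEntry j (k - 1)).eval z := by
  rcases lt_trichotomy j k with hjk | rfl | hjk
  · obtain ⟨n, rfl⟩ : ∃ n, k = j + n + 1 := ⟨k - j - 1, by omega⟩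
    have h := congrArg (eval z) (gegenbauerHyp_contiguous (natCast_ne_neg_add_three_halves j) n)
    simp only [eval_add, eval_sub, eval_mul, eval_pow, eval_X, eval_C, eval_one] at h
    simp only [psiEntry, if_pos hjk.le, if_pos (show j ≤ j + n + 1 - 1 by omega),
      show j + n + 1 - 1 - j = n by omega, show j + n + 1 - j = n + 1 by omega,
      derivative_C_mul, eval_mul, eval_C]
    push_cast
    linear_combination 2 * psiCoeff j (j + n + 1) * h
      + 2 * (gegenbauerHyp ((j : ℂ) + 1) n).eval z * psiCoeff_succ j n
  · rcases Nat.eq_zero_or_pos j with rfl | hj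
    · simp [psiEntry, gegenbauerHyp, hypergeometricPoly]
    · simp [psiEntry, gegenbauerHyp, hypergeometricPoly, show ¬ j ≤ j - 1 by omega]
  · simp [psiEntry, show ¬ j ≤ k by omega, show ¬ j ≤ k - 1 by omega]

lemma of_mul_S1_apply {ℓ : ℕ} (f : ℕ → ℕ → ℂ) (j k : Fin (ℓ + 1)) :
    (Matrix.of (fun a b : Fin (ℓ + 1) => f a b) * S1 ℓ) j k = 2 * (k : ℕ) * f j (k - 1) := by
  simp only [mul_apply, S1, of_apply]
  rcases Nat.eq_zero_or_pos (k : ℕ) with hk | hk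
  · rw [hk, Finset.sum_eq_zero fun b _ => by rw [if_neg (by omega), mul_zero]]
    simp
  · rw [Finset.sum_eq_single ⟨(k : ℕ) - 1, by omega⟩ (fun b _ hb => by
      rw [if_neg fun h => hb (Fin.ext (by simp; omega)), mul_zero]) (by simp),
      if_pos (by simp; omega)]
    push_cast [Nat.cast_sub (show 1 ≤ (k : ℕ) from hk)]
    ring

lemma psiDeriv_ode (ℓ : ℕ) (z : ℂ) :
    (1 - z ^ 2) • psiDeriv ℓ 2 z - (z • Cmat ℓ) * psiDeriv ℓ 1 z - Vmat ℓ * psiDeriv ℓ 0 z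
      = psiDeriv ℓ 0 z * Lam0 ℓ := by
  ext j k
  simp only [psiDeriv, Cmat, Vmat, Lam0, Matrix.sub_apply, Matrix.smul_apply, Matrix.smul_mul,
    diagonal_mul, mul_diagonal, of_apply, smul_eq_mul, Function.iterate_succ, Function.iterate_zero,
    Function.comp_apply, id]
  linear_combination psiEntry_ode j k z

lemma psiDeriv_contiguous (ℓ : ℕ) (z : ℂ) :
    (2 * (1 - z ^ 2)) • psiDeriv ℓ 1 z - (z • Cmat ℓ) * psiDeriv ℓ 0 z
      = psiDeriv ℓ 0 z * ((-z) • Cmat ℓ + S1 ℓ) := by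
  ext j k
  rw [Matrix.mul_add, Matrix.add_apply,
    show psiDeriv ℓ 0 z * S1 ℓ
      = Matrix.of (fun a b : Fin (ℓ + 1) => (psiEntry a b).eval z) * S1 ℓ from rfl,
    of_mul_S1_apply (fun a b => (psiEntry a b).eval z) j k]
  simp only [psiDeriv, Cmat, Matrix.sub_apply, Matrix.smul_apply, Matrix.smul_mul, Matrix.mul_smul,
    diagonal_mul, mul_diagonal, of_apply, smul_eq_mul, Function.iterate_one, Function.iterate_zero,
    id]
  linear_combination psiEntry_contiguous j k z

lemma hasDerivAt_psiDeriv (ℓ r : ℕ) (x : ℝ) (j k : Fin (ℓ + 1)) :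
    HasDerivAt (fun y : ℝ => psiDeriv ℓ r y j k) (psiDeriv ℓ (r + 1) x j k) x := by
  simp only [psiDeriv, of_apply, Function.iterate_succ_apply']
  exact ((derivative^[r] (psiEntry j k)).hasDerivAt (x : ℂ)).comp_ofReal

end Psi

/-- Conjugating `D̄ P = (1-u²)P'' - u C P' - V P` by `Ψ` yields the hypergeometric
operator `D̃ F = (1-u²)F'' + (-uC + S₁)F' + Λ₀ F`. -/
theorem conjugation_by_Psi_D (ℓ : ℕ) (F : ℝ → Fin (ℓ+1) → ℂ)
    (hF : ∀ u ∈ Set.Ioo (0:ℝ) 1, DifferentiableAt ℝ F u)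
    (hF' : ∀ u ∈ Set.Ioo (0:ℝ) 1, DifferentiableAt ℝ (deriv F) u)
    (G : ℝ → Fin (ℓ+1) → ℂ)
    (hG : ∀ u, G u = (PsiM ℓ u).mulVec (F u)) :
    ∀ u ∈ Set.Ioo (0:ℝ) 1,
      (1 - (u:ℂ)^2) • deriv (deriv G) u - (u:ℂ) • (Cmat ℓ).mulVec (deriv G u)
          - (Vmat ℓ).mulVec (G u)
        = (PsiM ℓ u).mulVec
            ((1 - (u:ℂ)^2) • deriv (deriv F) u
              + ((-(u:ℂ)) • Cmat ℓ + S1 ℓ).mulVec (deriv F u)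
              + (Lam0 ℓ).mulVec (F u)) := by
  intro u hu
  obtain rfl : G = fun v : ℝ => psiDeriv ℓ 0 (v : ℂ) *ᵥ F v :=
    funext fun v => by rw [hG, PsiM_eq_psiDeriv]
  have hG' := hasDerivAt_mulVec (hasDerivAt_psiDeriv ℓ 0 u) (hF u hu).hasDerivAt
  have hG'' := hasDerivAt_deriv_mulVec (Eventually.of_forall fun y => hasDerivAt_psiDeriv ℓ 0 y)
    (hasDerivAt_psiDeriv ℓ 1 u) (eventually_of_mem (isOpen_Ioo.mem_nhds hu) hF) (hF' u hu)
  rw [hG''.deriv, hG'.deriv, PsiM_eq_psiDeriv, ← Matrix.smul_mulVec (u : ℂ) (Cmat ℓ)]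
  exact mulVec_second_order_conj _ _ _ _ _ _ _ _ _ _ _ (psiDeriv_ode ℓ u) (psiDeriv_contiguous ℓ u)

end Stmt3
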